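/- There exist a constant C > 1 and μ₀ > 0 (depending only on α, L, ξ) such that for every μ ≥ μ₀, | ∫_{α²}^{T_{μ,L}} ∫_ℝ max(μ − (x+ξ)² e^{2t}/L², 0)^{1/2} dx dt − (π/2) · μ · L · e^{−α²} | ≤ C·√μ. -/
import Mathlib


open Real MeasureTheory

lemma integral_sqrt_max_one_sub_sq :
    ∫ y : ℝ, Real.sqrt (max (1 - y ^ 2) 0) = Real.pi / 2 := by
  have h0 : (∫ y in Set.Ioc (-1 : ℝ) 1, Real.sqrt (max (1 - y ^ 2) 0))
      = ∫ y : ℝ, Real.sqrt (max (1 - y ^ 2) 0) := by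
    apply setIntegral_eq_integral_of_forall_compl_eq_zero
    intro y hy
    have : 1 - y ^ 2 ≤ 0 := by
      simp only [Set.mem_Ioc, not_and_or, not_lt, not_le] at hy
      rcases hy with h | h <;> nlinarith
    rw [max_eq_right this, Real.sqrt_zero]
  rw [← h0, ← intervalIntegral.integral_of_le (by norm_num : (-1:ℝ) ≤ 1)]
  rw [show (∫ y in (-1:ℝ)..1, Real.sqrt (max (1 - y ^ 2) 0))
      = ∫ y in (-1:ℝ)..1, Real.sqrt (1 - y ^ 2) from ?_, integral_sqrt_one_sub_sq]
  apply intervalIntegral.integral_congr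
  intro y hy
  rw [Set.uIcc_of_le (by norm_num : (-1:ℝ) ≤ 1), Set.mem_Icc] at hy
  have : (0:ℝ) ≤ 1 - y ^ 2 := by nlinarith [hy.1, hy.2]
  simp only [max_eq_left this]

lemma inner_integral_eq (μ L ξ : ℝ) (hμ : 0 < μ) (hL : 0 < L) (t : ℝ) :
    (∫ x : ℝ, Real.sqrt (max (μ - (x + ξ) ^ 2 * Real.exp (2 * t) / L ^ 2) 0))
      = Real.pi / 2 * μ * L * Real.exp (-t) := by
  set q := Real.sqrt μ with hq
  have hq0 : 0 < q := Real.sqrt_pos.2 hμ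
  have hq2 : q ^ 2 = μ := Real.sq_sqrt hμ.le
  set r := L * q * Real.exp (-t) with hr
  have hr0 : 0 < r := by positivity
  have key : ∀ x : ℝ, μ - (x + ξ) ^ 2 * Real.exp (2 * t) / L ^ 2
      = μ * (1 - ((x + ξ) / r) ^ 2) := by
    intro x
    have hs : Real.exp (2 * t) = Real.exp t * Real.exp t := by
      rw [two_mul, Real.exp_add]
    have hrr : r = L * q / Real.exp t := by
      rw [hr, Real.exp_neg, div_eq_mul_inv]
    rw [hrr, hs, ← hq2]
    have h1 : Real.exp t ≠ 0 := (Real.exp_pos t).ne'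
    field_simp
  have step : ∀ x : ℝ, Real.sqrt (max (μ - (x + ξ) ^ 2 * Real.exp (2 * t) / L ^ 2) 0)
      = q * Real.sqrt (max (1 - ((x + ξ) / r) ^ 2) 0) := by
    intro x
    rw [key x, show max (μ * (1 - ((x + ξ) / r) ^ 2)) 0 = μ * max (1 - ((x + ξ) / r) ^ 2) 0 by
      rw [mul_max_of_nonneg _ _ hμ.le, mul_zero], Real.sqrt_mul hμ.le, hq]
  simp only [step]
  rw [MeasureTheory.integral_const_mul]
  have htrans : (∫ x : ℝ, Real.sqrt (max (1 - ((x + ξ) / r) ^ 2) 0))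
      = ∫ x : ℝ, Real.sqrt (max (1 - (x / r) ^ 2) 0) :=
    integral_add_right_eq_self (fun x => Real.sqrt (max (1 - (x / r) ^ 2) 0)) ξ
  rw [htrans, Measure.integral_comp_div (fun y => Real.sqrt (max (1 - y ^ 2) 0)) r,
    integral_sqrt_max_one_sub_sq, abs_of_pos hr0, smul_eq_mul, hr]
  have : q * (L * q * Real.exp (-t) * (Real.pi / 2))
      = Real.pi / 2 * q ^ 2 * L * Real.exp (-t) := by ring
  rw [this, hq2]

/-- Lemma 2.6 of the paper: there are `C > 1` and `μ₀ > 0` (depending only on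
`α, L, ξ`) such that for all `μ ≥ μ₀`,
`| ∫_{α²}^{T_{μ,L}} ∫_ℝ max(μ − (x+ξ)² e^{2t}/L² , 0)^{1/2} dx dt − (π/2) μ L e^{−α²} |
  ≤ C √μ`, where `T_{μ,L} = ln(L√μ / min(ξ, 1−ξ))`. -/
theorem double_integral_asymptotics
    (α L ξ : ℝ) (hα : 0 < α) (hL : 0 < L) (hξ : ξ ∈ Set.Ioo (0 : ℝ) 1) :
    ∃ C : ℝ, 1 < C ∧ ∃ μ₀ : ℝ, 0 < μ₀ ∧ ∀ μ : ℝ, μ₀ ≤ μ →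
      |(∫ t in (α ^ 2)..(Real.log (L * Real.sqrt μ / min ξ (1 - ξ))),
            ∫ x : ℝ, Real.sqrt (max (μ - (x + ξ) ^ 2 * Real.exp (2 * t) / L ^ 2) 0)) -
          (Real.pi / 2) * μ * L * Real.exp (-α ^ 2)| ≤ C * Real.sqrt μ := by
  refine ⟨4, by norm_num, 1, one_pos, fun μ hμ => ?_⟩
  have hμ0 : 0 < μ := lt_of_lt_of_le one_pos hμ
  set m := min ξ (1 - ξ) with hm
  have hm0 : 0 < m := lt_min hξ.1 (by linarith [hξ.2])
  have hm1 : m ≤ 1 := le_trans (min_le_left _ _) hξ.2.le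
  set T := Real.log (L * Real.sqrt μ / m) with hT
  have hq0 : 0 < Real.sqrt μ := Real.sqrt_pos.2 hμ0
  have harg : 0 < L * Real.sqrt μ / m := by positivity
  have houter : (∫ t in (α ^ 2)..T,
      ∫ x : ℝ, Real.sqrt (max (μ - (x + ξ) ^ 2 * Real.exp (2 * t) / L ^ 2) 0))
      = ∫ t in (α ^ 2)..T, Real.pi / 2 * μ * L * Real.exp (-t) :=
    intervalIntegral.integral_congr (fun t _ => inner_integral_eq μ L ξ hμ0 hL t)
  rw [houter]
  have hexp : (∫ t in (α ^ 2)..T, Real.exp (-t)) = Real.exp (-α ^ 2) - Real.exp (-T) := by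
    rw [show (fun t : ℝ => Real.exp (-t)) = fun t : ℝ => Real.exp (-t) from rfl,
      intervalIntegral.integral_comp_neg (fun t => Real.exp t), integral_exp]
  have hconst : (∫ t in (α ^ 2)..T, Real.pi / 2 * μ * L * Real.exp (-t))
      = Real.pi / 2 * μ * L * (Real.exp (-α ^ 2) - Real.exp (-T)) := by
    rw [← hexp, ← intervalIntegral.integral_const_mul]
  rw [hconst]
  have hET : Real.exp (-T) = m / (L * Real.sqrt μ) := by
    rw [hT, Real.exp_neg, Real.exp_log harg, inv_div]
  have hdiff : Real.pi / 2 * μ * L * (Real.exp (-α ^ 2) - Real.exp (-T)) -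
      Real.pi / 2 * μ * L * Real.exp (-α ^ 2) = -(Real.pi / 2 * μ * L * Real.exp (-T)) := by
    ring
  rw [hdiff, abs_neg, abs_of_nonneg (by positivity)]
  have hμsq : μ = Real.sqrt μ * Real.sqrt μ := (Real.mul_self_sqrt hμ0.le).symm
  have hval : Real.pi / 2 * μ * L * Real.exp (-T) = Real.pi / 2 * m * Real.sqrt μ := by
    calc Real.pi / 2 * μ * L * Real.exp (-T)
        = Real.pi / 2 * (Real.sqrt μ * Real.sqrt μ) * L * (m / (L * Real.sqrt μ)) := by
          rw [hET, Real.mul_self_sqrt hμ0.le]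
      _ = Real.pi / 2 * m * Real.sqrt μ := by
          field_simp
  rw [hval]
  have hπ : Real.pi ≤ 4 := Real.pi_le_four
  have h1 : Real.pi / 2 * m ≤ 4 := by
    nlinarith [mul_nonneg Real.pi_pos.le (sub_nonneg.2 hm1)]
  exact mul_le_mul_of_nonneg_right h1 hq0.le
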